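/- Let d ≥ 1 and let A = (a_{ij}) be a d×d matrix over ℝ (indices 1,…,d). For each i let N_i = 1 − E_{ii}·A, i.e. the matrix whose i-th row is (−a_{i1},…, 1−a_{ii},…, −a_{id}) and whose other rows agree with the identity; N_i is the matrix of the pseudo-reflexion s_i(e_j) = e_j − a_{ij}e_i. Let L be the lower triangular part of A including the diagonal (L_{ij} = a_{ij} for i ≥ j, 0 otherwise) and W the strictly upper triangular part of A (W_{ij} = a_{ij} for i < j, 0 otherwise), so A = L + W. Then 1 + W is invertible and N_1 · N_2 ⋯ N_d = (1 + W)⁻¹ · (1 − L); i.e. the Coxeter element, the composition of all the pseudo-reflexions taken with N_d applied first, equals (1 + W)⁻¹(1 − L). -/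

import Mathlib

/-!
Write `E k = single k k 1`, `P S = ∑ k ∈ S, E k`, and `L`, `W` for the lower and strictly upper
parts of `A`. For a strictly increasing list `l = [l₁, …, lₘ]` of indices with underlying set
`S`, `(1 + P S * W) * N l₁ * ⋯ * N lₘ = 1 - P S * L`; this is proved by prepending to `l` an
index `k` below all of `S`. Two facts make the step work: `P S * W * E k = 0`, because column `k`
of `W` vanishes in the rows `≥ k`; and `E k * L * N l₁ * ⋯ * N lₘ = E k * L`, because `E k * L`
lives in the columns `≤ k` and each `N j` with `j > k` only alters row `j`. For `S` the whole
index set this reads `(1 + W) * N 1 * ⋯ * N d = 1 - L`, and `1 + W` is unitriangular, hence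
invertible.
-/

open Matrix

namespace Matrix

variable {ι R : Type*} [LinearOrder ι] [Ring R]

def lowerPart (A : Matrix ι ι R) : Matrix ι ι R :=
  of fun i j => if j ≤ i then A i j else 0

def strictUpperPart (A : Matrix ι ι R) : Matrix ι ι R :=
  of fun i j => if i < j then A i j else 0

theorem lowerPart_add_strictUpperPart (A : Matrix ι ι R) :
    lowerPart A + strictUpperPart A = A := by
  ext i j
  by_cases h : j ≤ i
  · simp [lowerPart, strictUpperPart, h, not_lt.2 h]
  · simp [lowerPart, strictUpperPart, h, lt_of_not_ge h]

def coordProj (S : Finset ι) : Matrix ι ι R :=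
  ∑ k ∈ S, single k k 1

variable [Fintype ι]

theorem coordProj_univ : (coordProj Finset.univ : Matrix ι ι R) = 1 :=
  sum_single_one

def pseudoReflection (A : Matrix ι ι R) (k : ι) : Matrix ι ι R :=
  1 - single k k 1 * A

theorem coordProj_mul_single {S : Finset ι} {k : ι} (hk : k ∉ S) :
    (coordProj S : Matrix ι ι R) * single k k 1 = 0 := by
  rw [coordProj, Finset.sum_mul]
  exact Finset.sum_eq_zero fun i hi =>
    single_mul_single_of_ne (1 : R) i i k (ne_of_mem_of_not_mem hi hk) 1

theorem coordProj_mul_pseudoReflection (A : Matrix ι ι R) {S : Finset ι} {k : ι}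
    (hk : k ∉ S) : coordProj S * pseudoReflection A k = coordProj S := by
  rw [pseudoReflection, Matrix.mul_sub, Matrix.mul_one, ← Matrix.mul_assoc,
    coordProj_mul_single hk, Matrix.zero_mul, sub_zero]

theorem coordProj_mul_prod_pseudoReflection (A : Matrix ι ι R) {S : Finset ι} {l : List ι}
    (hl : ∀ k ∈ l, k ∉ S) :
    coordProj S * (l.map (pseudoReflection A)).prod = coordProj S := by
  induction l with
  | nil => simp
  | cons k l ih =>
    rw [List.map_cons, List.prod_cons, ← Matrix.mul_assoc,
      coordProj_mul_pseudoReflection A (hl k List.mem_cons_self),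
      ih fun j hj => hl j (List.mem_cons_of_mem k hj)]

theorem single_mul_lowerPart_mul_coordProj_Iic (A : Matrix ι ι R) (k : ι) :
    single k k 1 * lowerPart A * coordProj {j | j ≤ k} = single k k 1 * lowerPart A := by
  have hrow : ∀ T : Finset ι, single k k 1 * lowerPart A * coordProj T =
      ∑ j ∈ T, single k j (lowerPart A k j) := fun T => by
    simp [coordProj, Finset.mul_sum]
  rw [hrow, ← Matrix.mul_one (single k k 1 * lowerPart A), ← coordProj_univ, hrow]
  refine Finset.sum_subset (Finset.subset_univ _) fun j _ hj => ?_
  simp [lowerPart, not_le.2 (by simpa using hj)]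

theorem coordProj_mul_strictUpperPart_mul_single (A : Matrix ι ι R) {S : Finset ι} {k : ι}
    (hS : ∀ i ∈ S, k ≤ i) : coordProj S * strictUpperPart A * single k k 1 = 0 := by
  rw [coordProj, Finset.sum_mul, Finset.sum_mul]
  refine Finset.sum_eq_zero fun i hi => ?_
  simp [strictUpperPart, not_lt.2 (hS i hi)]

theorem one_add_coordProj_mul_strictUpperPart_mul_prod_pseudoReflection (A : Matrix ι ι R)
    {l : List ι} (hl : l.Pairwise (· < ·)) :
    (1 + coordProj l.toFinset * strictUpperPart A) * (l.map (pseudoReflection A)).prod =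
      1 - coordProj l.toFinset * lowerPart A := by
  induction l with
  | nil => simp [coordProj]
  | cons k l ih =>
    obtain ⟨hk, hl⟩ := List.pairwise_cons.1 hl
    set S := l.toFinset
    have hkS : k ∉ S := fun h => lt_irrefl k (hk k (List.mem_toFinset.1 h))
    have hproj : coordProj (insert k S) = single k k (1 : R) + coordProj S :=
      Finset.sum_insert hkS
    have hfirst : (1 + coordProj (insert k S) * strictUpperPart A) * pseudoReflection A k =
        1 + coordProj S * strictUpperPart A - single k k 1 * lowerPart A := by
      have hW : coordProj (insert k S) * strictUpperPart A * single k k 1 = 0 :=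
        coordProj_mul_strictUpperPart_mul_single A fun i hi => by
          rcases Finset.mem_insert.1 hi with rfl | hi
          exacts [le_rfl, (hk i (List.mem_toFinset.1 hi)).le]
      have hA : single k k 1 * A =
          single k k 1 * lowerPart A + single k k 1 * strictUpperPart A := by
        rw [← Matrix.mul_add, lowerPart_add_strictUpperPart]
      rw [pseudoReflection, Matrix.mul_sub, Matrix.mul_one, ← Matrix.mul_assoc, Matrix.add_mul,
        Matrix.one_mul, hW, add_zero, hA, hproj, Matrix.add_mul]
      abel
    have hrest : single k k 1 * lowerPart A * (l.map (pseudoReflection A)).prod =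
        single k k 1 * lowerPart A := by
      rw [← single_mul_lowerPart_mul_coordProj_Iic, Matrix.mul_assoc,
        coordProj_mul_prod_pseudoReflection A fun j hj => by simpa using hk j hj]
    rw [List.toFinset_cons, List.map_cons, List.prod_cons, ← Matrix.mul_assoc, hfirst,
      Matrix.sub_mul, hrest, ih hl, hproj, Matrix.add_mul]
    abel

theorem det_one_add_strictUpperPart {R : Type*} [CommRing R] (A : Matrix ι ι R) :
    (1 + strictUpperPart A).det = 1 := by
  have htri : (1 + strictUpperPart A).IsUpperTriangular := fun i j (hji : j < i) => by
    simp [strictUpperPart, one_apply_ne hji.ne', not_lt.2 hji.le]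
  rw [det_of_isUpperTriangular htri]
  simp [strictUpperPart]

end Matrix

theorem stmt11_general (d : ℕ)
    (A : Matrix (Fin d) (Fin d) ℝ)
    (N : Fin d → Matrix (Fin d) (Fin d) ℝ)
    (hN : ∀ i, N i = 1 - Matrix.single i i 1 * A)
    (L W : Matrix (Fin d) (Fin d) ℝ)
    (hL : L = Matrix.of fun i j : Fin d => if j ≤ i then A i j else 0)
    (hW : W = Matrix.of fun i j : Fin d => if i < j then A i j else 0) :
    IsUnit (1 + W) ∧ ((List.finRange d).map N).prod = (1 + W)⁻¹ * (1 - L) := by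
  obtain rfl : N = pseudoReflection A := funext hN
  obtain rfl : L = lowerPart A := hL
  obtain rfl : W = strictUpperPart A := hW
  have hdet : IsUnit (1 + strictUpperPart A).det := by
    rw [det_one_add_strictUpperPart]
    exact isUnit_one
  have hsweep := one_add_coordProj_mul_strictUpperPart_mul_prod_pseudoReflection A
    (List.sortedLT_finRange d).pairwise
  rw [List.toFinset_finRange, coordProj_univ, Matrix.one_mul, Matrix.one_mul] at hsweep
  refine ⟨(isUnit_iff_isUnit_det _).2 hdet, ?_⟩
  rw [← hsweep]
  exact (nonsing_inv_mul_cancel_left _ _ hdet).symm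

/-- Bourbaki, Ch. V, §6, Exercise 3: For a `d × d` real matrix `A`, with
pseudo-reflexions `N i = 1 - E_{ii} * A`, `L` the lower triangular part of `A` including
the diagonal, and `W` the strictly upper triangular part of `A` (so `A = L + W`),
one has `1 + W` invertible and `N_1 * N_2 * ⋯ * N_d = (1 + W)⁻¹ * (1 - L)`
(the Coxeter element, with `N_d` applied first). -/
theorem stmt11 (d : ℕ) (hd : 1 ≤ d)
    (A : Matrix (Fin d) (Fin d) ℝ)
    (N : Fin d → Matrix (Fin d) (Fin d) ℝ)
    (hN : ∀ i, N i = 1 - Matrix.single i i 1 * A)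
    (L W : Matrix (Fin d) (Fin d) ℝ)
    (hL : L = Matrix.of fun i j : Fin d => if j ≤ i then A i j else 0)
    (hW : W = Matrix.of fun i j : Fin d => if i < j then A i j else 0) :
    IsUnit (1 + W) ∧ ((List.finRange d).map N).prod = (1 + W)⁻¹ * (1 - L) :=
  stmt11_general d A N hN L W hL hW
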